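/- arXiv:2002.10689 — 4 statements merged into one kernel-verified Lean document; each statement's English description precedes it below -/
import Mathlib

section
/- Non-negativity of F-information: let F be a predictive family satisfying optional ignorance (for every f ∈ F and every P in the range of f there exists f' ∈ F with f'[x] = P for all x ∈ 𝒳 and f'[∅] = P). Then for any random variables X, Y, I_F(X → Y) = H_F(Y) − H_F(Y|X) ≥ 0. -/
/-!
Optional ignorance turns each `f ∈ F` into some `f' ∈ F` that ignores its side information and
predicts `f[∅]`; the conditional loss of `f'` is the unconditional loss of `f`, so the infimum
defining `H_F(Y|X)` runs over values that dominate every value in the one defining `H_F(Y)`.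
-/

open MeasureTheory

theorem csInf_image_le_csInf_image {ι α : Type*} [ConditionallyCompleteLattice α]
    {s t : Set ι} {f g : ι → α} (ht : t.Nonempty) (hf : BddBelow (f '' s))
    (h : ∀ j ∈ t, ∃ i ∈ s, f i ≤ g j) : sInf (f '' s) ≤ sInf (g '' t) := by
  refine le_csInf (ht.image g) (Set.forall_mem_image.2 fun j hj ↦ ?_)
  obtain ⟨i, hi, hij⟩ := h j hj
  exact (csInf_le hf (Set.mem_image_of_mem f hi)).trans hij

section CrossEntropy

variable {Ω 𝓧 𝓨 : Type*} [MeasureSpace Ω]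

noncomputable def crossEntropy (Y : Ω → 𝓨) (f : Option 𝓧 → 𝓨 → ℝ) : ℝ :=
  ∫ ω, -Real.log (f none (Y ω))

noncomputable def condCrossEntropy (X : Ω → 𝓧) (Y : Ω → 𝓨) (f : Option 𝓧 → 𝓨 → ℝ) : ℝ :=
  ∫ ω, -Real.log (f (some (X ω)) (Y ω))

theorem condCrossEntropy_eq_crossEntropy_of_forall_some (X : Ω → 𝓧) (Y : Ω → 𝓨)
    {f f' : Option 𝓧 → 𝓨 → ℝ} (h : ∀ x, f' (some x) = f none) :
    condCrossEntropy X Y f' = crossEntropy Y f := by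
  simp only [condCrossEntropy, crossEntropy, h]

end CrossEntropy

theorem information_nonneg_general
    {Ω 𝓧 𝓨 : Type*} [MeasureSpace Ω]
    (X : Ω → 𝓧) (Y : Ω → 𝓨)
    (F : Set (Option 𝓧 → 𝓨 → ℝ)) (hF : F.Nonempty)
    (hOI : ∀ f ∈ F, ∀ o : Option 𝓧, ∃ f' ∈ F,
      (∀ x : 𝓧, f' (some x) = f o) ∧ f' none = f o)
    (hbdd : BddBelow ((fun f => ∫ ω, -Real.log (f (some (X ω)) (Y ω))) '' F)) :
    0 ≤ sInf ((fun f => ∫ ω, -Real.log (f none (Y ω))) '' F)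
        - sInf ((fun f => ∫ ω, -Real.log (f (some (X ω)) (Y ω))) '' F) := by
  rw [sub_nonneg]
  refine csInf_image_le_csInf_image (f := condCrossEntropy X Y) (g := crossEntropy Y) hF hbdd ?_
  intro f hf
  obtain ⟨f', hf', hignore, -⟩ := hOI f hf none
  exact ⟨f', hf', (condCrossEntropy_eq_crossEntropy_of_forall_some X Y hignore).le⟩

/-- Non-negativity of F-information: if the predictive family `F`
satisfies optional ignorance, then `I_F(X → Y) = H_F(Y) - H_F(Y|X) ≥ 0`. -/
theorem information_nonneg
    {Ω 𝓧 𝓨 : Type*} [MeasureSpace Ω] [IsProbabilityMeasure (volume : Measure Ω)]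
    (X : Ω → 𝓧) (Y : Ω → 𝓨)
    (F : Set (Option 𝓧 → 𝓨 → ℝ)) (hF : F.Nonempty)
    (hOI : ∀ f ∈ F, ∀ o : Option 𝓧, ∃ f' ∈ F,
      (∀ x : 𝓧, f' (some x) = f o) ∧ f' none = f o)
    (hbdd : BddBelow ((fun f => ∫ ω, -Real.log (f (some (X ω)) (Y ω))) '' F)) :
    0 ≤ sInf ((fun f => ∫ ω, -Real.log (f none (Y ω))) '' F)
        - sInf ((fun f => ∫ ω, -Real.log (f (some (X ω)) (Y ω))) '' F) :=
  information_nonneg_general X Y F hF hOI hbdd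
end

section
/- Independence implies zero F-information: let F be a predictive family satisfying optional ignorance and let X, Y be independent random variables. Then I_F(X → Y) = H_F(Y) − H_F(Y|X) = 0. -/
/-!
Optional ignorance makes the two families of losses dominate each other. A predictor that ignores
its side information has the same loss in both problems, so `H_F(Y|X) ≤ H_F(Y)`. Conversely, for
any predictor `f`, the expected loss `∑ₓ p(x) L(f[x])` is at least the smallest per-`x` loss
`L(f[x₀])`, which is the loss of the constant predictor `f[x₀]` in the unconditional problem.
Sets that dominate each other in this way have the same infimum, whether or not they are bounded.
-/

open Finset

theorem exists_le_sum_mul_of_sum_eq_one {ι : Type*} [Fintype ι] (w g : ι → ℝ)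
    (hw : ∀ i, 0 ≤ w i) (hw_sum : ∑ i, w i = 1) : ∃ i, g i ≤ ∑ j, w j * g j := by
  have hne : (univ : Finset ι).Nonempty :=
    nonempty_of_sum_ne_zero (by rw [hw_sum]; exact one_ne_zero)
  obtain ⟨i, -, hmin⟩ := exists_min_image univ g hne
  refine ⟨i, ?_⟩
  calc g i = ∑ j, w j * g i := by rw [← sum_mul, hw_sum, one_mul]
    _ ≤ ∑ j, w j * g j :=
      sum_le_sum fun j _ => mul_le_mul_of_nonneg_left (hmin j (mem_univ j)) (hw j)

theorem sum_sum_mul_mul_eq_sum_mul_sum {α β : Type*} [Fintype α] [Fintype β]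
    (p : α → ℝ) (q : β → ℝ) (L : α → β → ℝ) :
    ∑ x, ∑ y, p x * q y * L x y = ∑ x, p x * ∑ y, q y * L x y := by
  simp only [mul_sum, mul_assoc]

theorem information_eq_zero_of_indep_general
    {𝓧 𝓨 : Type*} [Fintype 𝓧] [Fintype 𝓨]
    (pX : 𝓧 → ℝ) (pY : 𝓨 → ℝ)
    (hpX : ∀ x, 0 ≤ pX x) (hpXsum : ∑ x, pX x = 1)
    (F : Set (Option 𝓧 → 𝓨 → ℝ))
    (hOI : ∀ f ∈ F, ∀ o : Option 𝓧, ∃ f' ∈ F,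
      (∀ x : 𝓧, f' (some x) = f o) ∧ f' none = f o) :
    sInf ((fun f => ∑ y, pY y * (-Real.log (f none y))) '' F)
      - sInf ((fun f => ∑ x, ∑ y, pX x * pY y * (-Real.log (f (some x) y))) '' F)
      = 0 := by
  rw [sub_eq_zero]
  apply csInf_eq_csInf_of_forall_exists_le
  · rintro _ ⟨f, hf, rfl⟩
    obtain ⟨f', hf', hsome, -⟩ := hOI f hf none
    refine ⟨_, ⟨f', hf', rfl⟩, le_of_eq ?_⟩
    simp only [hsome, sum_sum_mul_mul_eq_sum_mul_sum, ← sum_mul, hpXsum, one_mul]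
  · rintro _ ⟨f, hf, rfl⟩
    obtain ⟨x, hx⟩ := exists_le_sum_mul_of_sum_eq_one pX
      (fun x => ∑ y, pY y * (-Real.log (f (some x) y))) hpX hpXsum
    obtain ⟨f', hf', -, hnone⟩ := hOI f hf (some x)
    refine ⟨_, ⟨f', hf', rfl⟩, ?_⟩
    simpa only [hnone, sum_sum_mul_mul_eq_sum_mul_sum] using hx

/-- Independence implies zero F-information. `X, Y` are independent
(finite) random variables with pmfs `pX, pY` (so the joint pmf is the product), and
`F` is a predictive family satisfying optional ignorance. Then
`I_F(X → Y) = H_F(Y) - H_F(Y|X) = 0`. -/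
theorem information_eq_zero_of_indep
    {𝓧 𝓨 : Type*} [Fintype 𝓧] [Fintype 𝓨]
    (pX : 𝓧 → ℝ) (pY : 𝓨 → ℝ)
    (hpX : ∀ x, 0 ≤ pX x) (hpXsum : ∑ x, pX x = 1)
    (hpY : ∀ y, 0 ≤ pY y) (hpYsum : ∑ y, pY y = 1)
    (F : Set (Option 𝓧 → 𝓨 → ℝ)) (hF : F.Nonempty)
    (hOI : ∀ f ∈ F, ∀ o : Option 𝓧, ∃ f' ∈ F,
      (∀ x : 𝓧, f' (some x) = f o) ∧ f' none = f o) :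
    sInf ((fun f => ∑ y, pY y * (-Real.log (f none y))) '' F)
      - sInf ((fun f => ∑ x, ∑ y, pX x * pY y * (-Real.log (f (some x) y))) '' F)
      = 0 :=
  information_eq_zero_of_indep_general pX pY hpX hpXsum F hOI
end

section
/- Variance blow-up of the density ratio: let X, Y be random variables on finite sets with joint pmf p(x,y) and marginals p(x), p(y), all positive. Define z(x,y) = p(x,y)/(p(x)p(y)). Then under the product distribution p(x)p(y): E[z] = 1 and Var(z) = E_{p(x,y)}[p(x,y)/(p(x)p(y))] − 1 ≥ e^{I(X;Y)} − 1, where I(X;Y) is the Shannon mutual information. -/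
/-!
Under the product of the marginals the density ratio `z` has mean `1` because `p(x)p(y)·z = p(x,y)`,
so its variance is `E_{p(x)p(y)}[z²] - 1 = E_{p(x,y)}[z] - 1`. Jensen's inequality for the convex
function `exp` under `p(x,y)` gives `E_{p(x,y)}[z] = E_{p(x,y)}[exp (log z)] ≥ exp (E_{p(x,y)}[log z])
= e^{I(X;Y)}`.
-/

open Finset Real

theorem exp_sum_mul_log_le_sum_mul {ι : Type*} (s : Finset ι) {w f : ι → ℝ}
    (hw : ∀ i ∈ s, 0 ≤ w i) (hw₁ : ∑ i ∈ s, w i = 1) (hf : ∀ i ∈ s, 0 < f i) :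
    exp (∑ i ∈ s, w i * log (f i)) ≤ ∑ i ∈ s, w i * f i :=
  calc exp (∑ i ∈ s, w i * log (f i))
      ≤ ∑ i ∈ s, w i * exp (log (f i)) :=
        convexOn_exp.map_sum_le hw hw₁ fun _ _ => Set.mem_univ _
    _ = ∑ i ∈ s, w i * f i := sum_congr rfl fun i hi => by rw [exp_log (hf i hi)]

theorem sum_mul_sub_one_sq_eq {ι : Type*} (s : Finset ι) {q z : ι → ℝ}
    (hq : ∑ i ∈ s, q i = 1) (hqz : ∑ i ∈ s, q i * z i = 1) :
    ∑ i ∈ s, q i * (z i - 1) ^ 2 = ∑ i ∈ s, q i * z i ^ 2 - 1 := by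
  have expand : ∀ i, q i * (z i - 1) ^ 2 = q i * z i ^ 2 - 2 * (q i * z i) + q i := fun i => by
    ring
  simp only [expand, sum_add_distrib, sum_sub_distrib, ← mul_sum, hq, hqz]
  ring

theorem sum_sum_marginal_mul_marginal {α β : Type*} [Fintype α] [Fintype β] (p : α → β → ℝ) :
    ∑ x, ∑ y, (∑ y', p x y') * (∑ x', p x' y) = (∑ x, ∑ y, p x y) ^ 2 := by
  simp_rw [← mul_sum, ← sum_mul, sq]
  rw [sum_comm (f := fun x' _ => p x' _)]

/-- For the density ratio `z(x,y) = p(x,y)/(p(x)p(y))` under the product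
distribution: `E[z] = 1`, `Var(z) = E_{p(x,y)}[z] - 1`, and
`Var(z) ≥ e^{I(X;Y)} - 1`. -/
theorem density_ratio_variance_blowup
    {𝓧 𝓨 : Type*} [Fintype 𝓧] [Fintype 𝓨]
    (p : 𝓧 → 𝓨 → ℝ) (hp : ∀ x y, 0 < p x y) (hsum : ∑ x, ∑ y, p x y = 1)
    (z : 𝓧 → 𝓨 → ℝ)
    (hz : ∀ x y, z x y = p x y / ((∑ y', p x y') * (∑ x', p x' y)))
    (I : ℝ) (hI : I = ∑ x, ∑ y, p x y * Real.log (z x y)) :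
    (∑ x, ∑ y, (∑ y', p x y') * (∑ x', p x' y) * z x y = 1)
    ∧ (∑ x, ∑ y, (∑ y', p x y') * (∑ x', p x' y) * (z x y - 1) ^ 2
        = (∑ x, ∑ y, p x y * z x y) - 1)
    ∧ (Real.exp I - 1 ≤ ∑ x, ∑ y, (∑ y', p x y') * (∑ x', p x' y) * (z x y - 1) ^ 2) := by
  set q : 𝓧 → 𝓨 → ℝ := fun x y => (∑ y', p x y') * (∑ x', p x' y)
  have hq_pos : ∀ x y, 0 < q x y := fun x y =>
    mul_pos (sum_pos (fun y' _ => hp x y') ⟨y, mem_univ y⟩)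
      (sum_pos (fun x' _ => hp x' y) ⟨x, mem_univ x⟩)
  have hqz : ∀ x y, q x y * z x y = p x y := fun x y => by
    rw [hz, mul_div_cancel₀ _ (hq_pos x y).ne']
  have hz_pos : ∀ x y, 0 < z x y := fun x y => by rw [hz]; exact div_pos (hp x y) (hq_pos x y)
  have hq₁ : ∑ x, ∑ y, q x y = 1 := by rw [sum_sum_marginal_mul_marginal, hsum, one_pow]
  have hmean : ∑ x, ∑ y, q x y * z x y = 1 := by simp only [hqz, hsum]
  have hvar := sum_mul_sub_one_sq_eq univ (q := fun i : 𝓧 × 𝓨 => q i.1 i.2)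
    (z := fun i => z i.1 i.2) (by rwa [Fintype.sum_prod_type]) (by rwa [Fintype.sum_prod_type])
  -- `q z² = (q z) z = p z`
  simp only [Fintype.sum_prod_type, sq (z _ _), ← mul_assoc, hqz] at hvar
  have hjensen := exp_sum_mul_log_le_sum_mul univ (w := fun i : 𝓧 × 𝓨 => p i.1 i.2)
    (f := fun i => z i.1 i.2) (fun i _ => (hp i.1 i.2).le) (by rwa [Fintype.sum_prod_type])
    fun i _ => hz_pos i.1 i.2
  simp only [Fintype.sum_prod_type, ← hI] at hjensen
  exact ⟨hmean, hvar, by linarith⟩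
end

section
/- Variance lower bound for the empirical NWJ estimator at the optimal critic: with f(x,y) = 1 + log(p(x,y)/(p(x)p(y))), the estimator Î_NWJ = (1/N)∑ᵢ f(xᵢ,yᵢ) − (e^{−1}/N)∑ᵢ e^{f(x̄ᵢ,ȳᵢ)}, where (xᵢ,yᵢ) ∼ p(x,y) i.i.d. and independently (x̄ᵢ,ȳᵢ) ∼ p(x)p(y) i.i.d., satisfies Var(Î_NWJ) ≥ (e^{I(X;Y)} − 1)/N. -/
/-!
At the optimal critic `e⁻¹ e^f = z`, so the estimator is a sample mean of `f` over the joint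
samples minus a sample mean of `z` over the independent product samples. The variance of such a
difference is the sum of the two variances, and averaging `N` i.i.d. copies divides a variance by
`N`; dropping the first summand leaves `Var_q(z) / N` with `q = p(x) p(y)`. As `z = p / q`, this
variance is the χ²-divergence `E_p[z] - 1`, and Jensen's inequality for `exp` gives
`E_p[z] = E_p[exp (log z)] ≥ exp (E_p[log z]) = e^I`.
-/

open Finset

noncomputable def weightedVariance {α : Type*} [Fintype α] (w g : α → ℝ) : ℝ :=
  ∑ a, w a * g a ^ 2 - (∑ a, w a * g a) ^ 2

section WeightedVariance

variable {α β : Type*} [Fintype α] [Fintype β]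

theorem weightedVariance_nonneg {w : α → ℝ} (hw₀ : ∀ a, 0 ≤ w a) (hw₁ : ∑ a, w a = 1)
    (g : α → ℝ) : 0 ≤ weightedVariance w g := by
  have := even_two.convexOn_pow.map_sum_le (t := univ) (p := g) (fun a _ => hw₀ a) hw₁
    (fun a _ => Set.mem_univ _)
  simp only [smul_eq_mul] at this
  exact sub_nonneg.2 this

theorem weightedVariance_const_mul (w g : α → ℝ) (c : ℝ) :
    weightedVariance w (fun a => c * g a) = c ^ 2 * weightedVariance w g := by
  simp only [weightedVariance, mul_pow, ← mul_sum, mul_left_comm (w _) (c ^ 2),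
    mul_left_comm (w _) c]
  ring

theorem weightedVariance_neg (w g : α → ℝ) :
    weightedVariance w (fun a => -g a) = weightedVariance w g := by
  simp only [weightedVariance, neg_sq, mul_neg, sum_neg_distrib]

theorem weightedVariance_comp_equiv (e : α ≃ β) (w g : β → ℝ) :
    weightedVariance (w ∘ e) (g ∘ e) = weightedVariance w g := by
  simp only [weightedVariance, Function.comp, e.sum_comp (fun b => w b * g b ^ 2),
    e.sum_comp (fun b => w b * g b)]

theorem weightedVariance_prod_add {w : α → ℝ} {v : β → ℝ} (hw : ∑ a, w a = 1)
    (hv : ∑ b, v b = 1) (g : α → ℝ) (h : β → ℝ) :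
    weightedVariance (fun s : α × β => w s.1 * v s.2) (fun s => g s.1 + h s.2)
      = weightedVariance w g + weightedVariance v h := by
  have sum_mul_mul (F : α → ℝ) (G : β → ℝ) :
      ∑ s : α × β, w s.1 * v s.2 * (F s.1 * G s.2) = (∑ a, w a * F a) * ∑ b, v b * G b := by
    rw [Fintype.sum_prod_type, sum_mul_sum]
    exact sum_congr rfl fun a _ => sum_congr rfl fun b _ => by ring
  have mean_g := sum_mul_mul g (fun _ => 1)
  have mean_h := sum_mul_mul (fun _ => 1) h
  have moment_g := sum_mul_mul (fun a => g a ^ 2) (fun _ => 1)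
  have moment_h := sum_mul_mul (fun _ => 1) (fun b => h b ^ 2)
  have cross := sum_mul_mul (fun a => 2 * g a) h
  simp only [mul_one, one_mul, hw, hv] at mean_g mean_h moment_g moment_h
  simp only [weightedVariance, add_sq, mul_add, sum_add_distrib]
  rw [moment_g, moment_h, mean_g, mean_h, cross]
  simp only [mul_left_comm _ (2 : ℝ), ← mul_sum]
  ring

theorem weightedVariance_prod_sub {w : α → ℝ} {v : β → ℝ} (hw : ∑ a, w a = 1)
    (hv : ∑ b, v b = 1) (g : α → ℝ) (h : β → ℝ) :
    weightedVariance (fun s : α × β => w s.1 * v s.2) (fun s => g s.1 - h s.2)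
      = weightedVariance w g + weightedVariance v h := by
  simpa only [← sub_eq_add_neg, weightedVariance_neg] using
    weightedVariance_prod_add hw hv g (fun b => -h b)

theorem sum_pi_prod_eq_one {q : α → ℝ} (hq : ∑ a, q a = 1) (n : ℕ) :
    ∑ t : Fin n → α, ∏ i, q (t i) = 1 := by
  rw [← Fintype.sum_pow, hq, one_pow]

theorem weightedVariance_pi_sum {q : α → ℝ} (hq : ∑ a, q a = 1) (h : α → ℝ) (n : ℕ) :
    weightedVariance (fun t : Fin n → α => ∏ i, q (t i)) (fun t => ∑ i, h (t i))
      = n * weightedVariance q h := by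
  induction n with
  | zero => simp [weightedVariance]
  | succ n ih =>
    rw [← weightedVariance_comp_equiv (Fin.consEquiv fun _ => α)]
    have weight_cons : (fun t : Fin (n + 1) → α => ∏ i, q (t i)) ∘ Fin.consEquiv (fun _ => α)
        = fun s => q s.1 * ∏ i, q (s.2 i) := by
      funext s; simp [Fin.prod_univ_succ, Fin.consEquiv]
    have sum_cons : (fun t : Fin (n + 1) → α => ∑ i, h (t i)) ∘ Fin.consEquiv (fun _ => α)
        = fun s => h s.1 + ∑ i, h (s.2 i) := by
      funext s; simp [Fin.sum_univ_succ, Fin.consEquiv]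
    rw [weight_cons, sum_cons,
      weightedVariance_prod_add hq (sum_pi_prod_eq_one hq n) h (fun t => ∑ i, h (t i)), ih]
    push_cast
    ring

theorem weightedVariance_pi_average {q : α → ℝ} (hq : ∑ a, q a = 1) (h : α → ℝ) (n : ℕ) :
    weightedVariance (fun t : Fin n → α => ∏ i, q (t i)) (fun t => (n : ℝ)⁻¹ * ∑ i, h (t i))
      = weightedVariance q h / n := by
  rw [weightedVariance_const_mul, weightedVariance_pi_sum hq]
  rcases eq_or_ne (n : ℝ) 0 with hn | hn
  · simp [hn]
  · field_simp

theorem weightedVariance_div {p q : α → ℝ} (hq : ∀ a, q a ≠ 0) (hp : ∑ a, p a = 1) :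
    weightedVariance q (fun a => p a / q a) = ∑ a, p a * (p a / q a) - 1 := by
  have hmean (a : α) : q a * (p a / q a) = p a := mul_div_cancel₀ _ (hq a)
  simp only [weightedVariance, hmean, hp, sq, ← mul_assoc]
  ring

end WeightedVariance

theorem Real.exp_sum_mul_log_le {α : Type*} [Fintype α] {w z : α → ℝ} (hw₀ : ∀ a, 0 ≤ w a)
    (hw₁ : ∑ a, w a = 1) (hz : ∀ a, 0 < z a) :
    Real.exp (∑ a, w a * Real.log (z a)) ≤ ∑ a, w a * z a := by
  have := convexOn_exp.map_sum_le (t := univ) (p := fun a => Real.log (z a))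
    (fun a _ => hw₀ a) hw₁ (fun a _ => Set.mem_univ _)
  simpa only [smul_eq_mul, Real.exp_log (hz _)] using this

theorem sum_marginal_mul_marginal {α β : Type*} [Fintype α] [Fintype β] {p : α → β → ℝ}
    (hp : ∑ a, ∑ b, p a b = 1) :
    ∑ s : α × β, (∑ b, p s.1 b) * (∑ a, p a s.2) = 1 := by
  simp only [Fintype.sum_prod_type]
  rw [← sum_mul_sum, hp, sum_comm, hp, one_mul]

theorem nwj_variance_lower_bound_general
    {𝓧 𝓨 : Type*} [Fintype 𝓧] [Fintype 𝓨]
    (p : 𝓧 → 𝓨 → ℝ) (hp : ∀ x y, 0 < p x y) (hsum : ∑ x, ∑ y, p x y = 1)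
    (z : 𝓧 → 𝓨 → ℝ)
    (hz : ∀ x y, z x y = p x y / ((∑ y', p x y') * (∑ x', p x' y)))
    (f : 𝓧 → 𝓨 → ℝ) (hf : ∀ x y, f x y = 1 + Real.log (z x y))
    (I : ℝ) (hI : I = ∑ x, ∑ y, p x y * Real.log (z x y))
    (N : ℕ)
    (P : ((Fin N → 𝓧 × 𝓨) × (Fin N → 𝓧 × 𝓨)) → ℝ)
    (hP : ∀ s, P s = (∏ i, p (s.1 i).1 (s.1 i).2) *
        ∏ i, (∑ y', p (s.2 i).1 y') * (∑ x', p x' (s.2 i).2))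
    (T : ((Fin N → 𝓧 × 𝓨) × (Fin N → 𝓧 × 𝓨)) → ℝ)
    (hT : ∀ s, T s = (N : ℝ)⁻¹ * (∑ i, f (s.1 i).1 (s.1 i).2)
        - Real.exp (-1) * ((N : ℝ)⁻¹ * ∑ i, Real.exp (f (s.2 i).1 (s.2 i).2))) :
    (Real.exp I - 1) / N ≤
      (∑ s, P s * T s ^ 2) - (∑ s, P s * T s) ^ 2 := by
  set q : 𝓧 × 𝓨 → ℝ := fun s => (∑ y, p s.1 y) * (∑ x, p x s.2)
  have hq_pos (s : 𝓧 × 𝓨) : 0 < q s :=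
    mul_pos (sum_pos (fun y _ => hp _ y) ⟨s.2, mem_univ _⟩)
      (sum_pos (fun x _ => hp x _) ⟨s.1, mem_univ _⟩)
  have hp_sum : ∑ s : 𝓧 × 𝓨, p s.1 s.2 = 1 := by rwa [Fintype.sum_prod_type]
  have hq_sum : ∑ s, q s = 1 := sum_marginal_mul_marginal hsum
  have hz_pos (s : 𝓧 × 𝓨) : 0 < z s.1 s.2 := hz s.1 s.2 ▸ div_pos (hp _ _) (hq_pos s)
  have jensen : Real.exp I ≤ ∑ s : 𝓧 × 𝓨, p s.1 s.2 * z s.1 s.2 := by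
    rw [hI, ← Fintype.sum_prod_type']
    exact Real.exp_sum_mul_log_le (fun s => (hp _ _).le) hp_sum hz_pos
  have var_z : weightedVariance q (fun s => z s.1 s.2)
      = ∑ s : 𝓧 × 𝓨, p s.1 s.2 * z s.1 s.2 - 1 := by
    simp only [hz]
    exact weightedVariance_div (fun s => (hq_pos s).ne') hp_sum
  have hT' : T = fun s => (N : ℝ)⁻¹ * (∑ i, f (s.1 i).1 (s.1 i).2)
      - (N : ℝ)⁻¹ * ∑ i, z (s.2 i).1 (s.2 i).2 := by
    funext s
    simp only [hT, mul_sum, mul_left_comm (Real.exp (-1)), ← Real.exp_add, hf,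
      neg_add_cancel_left, Real.exp_log (hz_pos _)]
  obtain rfl : P = fun s => (∏ i, p (s.1 i).1 (s.1 i).2) * ∏ i, q (s.2 i) := funext hP
  calc (Real.exp I - 1) / N
      ≤ weightedVariance q (fun s => z s.1 s.2) / N := by rw [var_z]; gcongr
    _ ≤ weightedVariance (fun t : Fin N → 𝓧 × 𝓨 => ∏ i, p (t i).1 (t i).2)
          (fun t => (N : ℝ)⁻¹ * (∑ i, f (t i).1 (t i).2))
        + weightedVariance q (fun s => z s.1 s.2) / N :=
        le_add_of_nonneg_left <| weightedVariance_nonneg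
          (fun t => prod_nonneg fun i _ => (hp _ _).le) (sum_pi_prod_eq_one hp_sum N) _
    _ = _ := by
        rw [hT', ← weightedVariance_pi_average hq_sum]
        exact (weightedVariance_prod_sub (sum_pi_prod_eq_one hp_sum N)
          (sum_pi_prod_eq_one hq_sum N) _ _).symm

/-- Variance lower bound for the empirical NWJ estimator at the optimal
critic `f(x,y) = 1 + log(p(x,y)/(p(x)p(y)))`: with `N` i.i.d. samples from `p(x,y)`
and `N` independent i.i.d. samples from `p(x)p(y)`,
`Var(Î_NWJ) ≥ (e^{I(X;Y)} - 1)/N`. The variance is taken over the joint sampling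
distribution `P` on pairs of samples, and `T` is the empirical NWJ estimator. -/
theorem nwj_variance_lower_bound
    {𝓧 𝓨 : Type*} [Fintype 𝓧] [Fintype 𝓨] [DecidableEq 𝓧] [DecidableEq 𝓨]
    (p : 𝓧 → 𝓨 → ℝ) (hp : ∀ x y, 0 < p x y) (hsum : ∑ x, ∑ y, p x y = 1)
    (z : 𝓧 → 𝓨 → ℝ)
    (hz : ∀ x y, z x y = p x y / ((∑ y', p x y') * (∑ x', p x' y)))
    (f : 𝓧 → 𝓨 → ℝ) (hf : ∀ x y, f x y = 1 + Real.log (z x y))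
    (I : ℝ) (hI : I = ∑ x, ∑ y, p x y * Real.log (z x y))
    (N : ℕ) (hN : 0 < N)
    (P : ((Fin N → 𝓧 × 𝓨) × (Fin N → 𝓧 × 𝓨)) → ℝ)
    (hP : ∀ s, P s = (∏ i, p (s.1 i).1 (s.1 i).2) *
        ∏ i, (∑ y', p (s.2 i).1 y') * (∑ x', p x' (s.2 i).2))
    (T : ((Fin N → 𝓧 × 𝓨) × (Fin N → 𝓧 × 𝓨)) → ℝ)
    (hT : ∀ s, T s = (N : ℝ)⁻¹ * (∑ i, f (s.1 i).1 (s.1 i).2)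
        - Real.exp (-1) * ((N : ℝ)⁻¹ * ∑ i, Real.exp (f (s.2 i).1 (s.2 i).2))) :
    (Real.exp I - 1) / N ≤
      (∑ s, P s * T s ^ 2) - (∑ s, P s * T s) ^ 2 :=
  nwj_variance_lower_bound_general p hp hsum z hz f hf I hI N P hP T hT
end
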